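/- For every j ∈ {1, …, N} and every natural number k, the even moments of the self-adjoint element L_j + L_j* in the vacuum state are given by ⟨(L_j + L_j*)^{2k} δ_e, δ_e⟩ = catalan(k), the k-th Catalan number; that is, each L_j + L_j* is a standard semicircular random variable with respect to the vacuum state. -/

import Mathlib

/-!
On the vectors `δ_{g^m}` with `g = g_j`, the operator `T = L_j + L_j*` acts as the Jacobi shift
`δ_{g^m} ↦ δ_{g^(m+1)} + δ_{g^(m-1)}`, the second term absent at `m = 0`. Moving `T` across the
inner product (it is self-adjoint), `⟪T^n δ_e, δ_{g^m}⟫` obeys the recursion counting ±1 walks of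
length `n` from `0` to `m` that never go below `0`. By the reflection principle this count is
`W(n, m) - W(n, m + 2)`, where `W` counts unrestricted walks on `ℤ`, so the moment of order `2k`
is `C(2k, k) - C(2k, k + 1) = catalan k`.
-/

noncomputable section

/-- The Hilbert space `ℓ²(FreeMonoid (Fin N), ℂ)`. -/
abbrev FMH (N : ℕ) : Type := lp (fun _ : FreeMonoid (Fin N) => ℂ) 2

/-- The standard orthonormal basis vector `δ_w` at the word `w`. -/
noncomputable def delta (N : ℕ) (w : FreeMonoid (Fin N)) : FMH N :=
  letI : DecidableEq (FreeMonoid (Fin N)) := Classical.decEq _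
  lp.single 2 w 1

def walkCount : ℕ → ℤ → ℕ
  | 0, m => if m = 0 then 1 else 0
  | n + 1, m => walkCount n (m - 1) + walkCount n (m + 1)

def nonnegWalkCount : ℕ → ℕ → ℕ
  | 0, 0 => 1
  | 0, _ + 1 => 0
  | n + 1, 0 => nonnegWalkCount n 1
  | n + 1, m + 1 => nonnegWalkCount n m + nonnegWalkCount n (m + 2)

theorem walkCount_neg (n : ℕ) (m : ℤ) : walkCount n (-m) = walkCount n m := by
  induction n generalizing m with
  | zero => simp [walkCount]
  | succ n ih =>
    rw [walkCount, walkCount, ← ih (m - 1), ← ih (m + 1), add_comm]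
    congr 2 <;> ring

theorem walkCount_eq_zero_of_lt_neg {n : ℕ} {m : ℤ} (h : m < -n) : walkCount n m = 0 := by
  induction n generalizing m with
  | zero => rw [walkCount, if_neg (by omega)]
  | succ n ih => rw [walkCount, ih (by omega), ih (by omega)]

theorem walkCount_two_mul_sub (n i : ℕ) : walkCount n (2 * i - n) = n.choose i := by
  induction n generalizing i with
  | zero =>
    rcases i with _ | i
    · simp [walkCount]
    · simp [walkCount]; omega
  | succ n ih =>
    rw [walkCount]
    cases i with
    | zero =>
      rw [walkCount_eq_zero_of_lt_neg (by push_cast; omega), zero_add]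
      simpa using ih 0
    | succ i =>
      rw [Nat.choose_succ_succ', ← ih i, ← ih (i + 1)]
      congr 2 <;> push_cast <;> ring

theorem nonnegWalkCount_eq_walkCount_sub_walkCount (n m : ℕ) :
    (nonnegWalkCount n m : ℤ) = walkCount n m - walkCount n (m + 2) := by
  induction n generalizing m with
  | zero =>
    cases m with
    | zero => rfl
    | succ m => rw [nonnegWalkCount, walkCount, walkCount, if_neg (by omega), if_neg (by omega)]; rfl
  | succ n ih =>
    cases m with
    | zero =>
      have hsymm : walkCount n (-1) = walkCount n 1 := walkCount_neg n 1
      simp only [nonnegWalkCount, ih, walkCount]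
      push_cast
      omega
    | succ m =>
      simp only [nonnegWalkCount, walkCount, Nat.cast_add, ih]
      push_cast
      ring_nf

theorem catalan_eq_choose_sub_choose (k : ℕ) :
    (catalan k : ℤ) = (2 * k).choose k - (2 * k).choose (k + 1) := by
  have hcat : ((k + 1) * catalan k : ℤ) = (2 * k).choose k := by
    exact_mod_cast succ_mul_catalan_eq_centralBinom k
  have hchoose : ((2 * k).choose (k + 1) * (k + 1) : ℤ) = (2 * k).choose k * k := by
    have := Nat.choose_succ_right_eq (2 * k) k
    rw [show 2 * k - k = k by omega] at this
    exact_mod_cast this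
  have hk : (k + 1 : ℤ) ≠ 0 := by positivity
  apply mul_left_cancel₀ hk
  linear_combination hcat + hchoose

theorem nonnegWalkCount_two_mul_zero (k : ℕ) : nonnegWalkCount (2 * k) 0 = catalan k := by
  have h := nonnegWalkCount_eq_walkCount_sub_walkCount (2 * k) 0
  have h0 := walkCount_two_mul_sub (2 * k) k
  have h2 := walkCount_two_mul_sub (2 * k) (k + 1)
  push_cast at h h0 h2
  rw [show (2 * k - 2 * k : ℤ) = 0 by ring] at h0
  rw [show (2 * (k + 1) - 2 * k : ℤ) = 0 + 2 by ring, zero_add] at h2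
  rw [← Int.natCast_inj, h, h0, h2, catalan_eq_choose_sub_choose]

section InnerProductSpace

variable {𝕜 E : Type*} [RCLike 𝕜] [NormedAddCommGroup E] [InnerProductSpace 𝕜 E]

open scoped InnerProductSpace

theorem HilbertBasis.ext_inner {ι : Type*} (b : HilbertBasis ι 𝕜 E) {x y : E}
    (h : ∀ i, ⟪b i, x⟫_𝕜 = ⟪b i, y⟫_𝕜) : x = y :=
  b.repr.injective <| lp.ext <| funext fun i => by
    simp only [HilbertBasis.repr_apply_apply, h]

theorem LinearMap.IsSymmetric.inner_pow_apply_eq_nonnegWalkCount {T : E →ₗ[𝕜] E}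
    (hT : T.IsSymmetric) {e : ℕ → E} (he : Orthonormal 𝕜 e) (h₀ : T (e 0) = e 1)
    (h₁ : ∀ m, T (e (m + 1)) = e (m + 2) + e m) (n m : ℕ) :
    ⟪(T ^ n) (e 0), e m⟫_𝕜 = nonnegWalkCount n m := by
  induction n generalizing m with
  | zero =>
    rw [pow_zero, Module.End.one_apply, orthonormal_iff_ite.mp he]
    rcases m with _ | m <;> simp [nonnegWalkCount]
  | succ n ih =>
    rw [pow_succ', Module.End.mul_apply, hT]
    rcases m with _ | m
    · rw [h₀, ih, nonnegWalkCount]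
    · rw [h₁, inner_add_right, ih, ih, nonnegWalkCount, Nat.cast_add, add_comm]

variable [CompleteSpace E] {ι : Type*} (b : HilbertBasis ι 𝕜 E) {A : E →L[𝕜] E} {σ : ι → ι}

theorem HilbertBasis.adjoint_apply_apply_of_apply_eq (hσ : σ.Injective)
    (hA : ∀ i, A (b i) = b (σ i)) (i : ι) : A.adjoint (b (σ i)) = b i :=
  b.ext_inner fun j => by
    classical
    rw [← ContinuousLinearMap.adjoint_inner_left, ContinuousLinearMap.adjoint_adjoint, hA]
    simp only [orthonormal_iff_ite.mp b.orthonormal, hσ.eq_iff]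

theorem HilbertBasis.adjoint_apply_eq_zero_of_notMem_range
    (hA : ∀ i, A (b i) = b (σ i)) {i : ι} (hi : i ∉ Set.range σ) : A.adjoint (b i) = 0 :=
  b.ext_inner fun j => by
    rw [← ContinuousLinearMap.adjoint_inner_left, ContinuousLinearMap.adjoint_adjoint, hA,
      inner_zero_right]
    exact b.orthonormal.2 fun h => hi ⟨j, h⟩

end InnerProductSpace

theorem FreeMonoid.length_of_pow {α : Type*} (a : α) (m : ℕ) : (of a ^ m).length = m := by
  induction m with
  | zero => rfl
  | succ m ih => rw [pow_succ, length_mul, ih, length_of]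

theorem semicircular_even_moments (N : ℕ)
    (L : FreeMonoid (Fin N) → (FMH N →L[ℂ] FMH N))
    (hL : ∀ w h : FreeMonoid (Fin N), L w (delta N h) = delta N (w * h))
    (j : Fin N) (k : ℕ) :
    (inner ℂ
        (((L (FreeMonoid.of j) + ContinuousLinearMap.adjoint (L (FreeMonoid.of j))) ^ (2 * k))
          (delta N 1))
        (delta N 1) : ℂ) = (catalan k : ℂ) := by
  set b : HilbertBasis (FreeMonoid (Fin N)) ℂ (FMH N) := default
  set A := L (FreeMonoid.of j)
  set e : ℕ → FMH N := fun m => b (FreeMonoid.of j ^ m)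
  have hA : ∀ h, A (b h) = b (FreeMonoid.of j * h) := hL _
  have hA_e : ∀ m, A (e m) = e (m + 1) := fun m => by simp only [e, hA, pow_succ']
  have hA_adjoint_e : ∀ m, A.adjoint (e (m + 1)) = e m := fun m => by
    simp only [e, pow_succ']
    exact b.adjoint_apply_apply_of_apply_eq (mul_right_injective _) hA _
  have hA_adjoint_e_zero : A.adjoint (e 0) = 0 :=
    b.adjoint_apply_eq_zero_of_notMem_range hA (by simp)
  have he : Orthonormal ℂ e :=
    b.orthonormal.comp _ (Function.LeftInverse.injective (FreeMonoid.length_of_pow j))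
  have hT : ((A + A.adjoint : FMH N →L[ℂ] FMH N) : FMH N →ₗ[ℂ] FMH N).IsSymmetric := by
    rw [← ContinuousLinearMap.star_eq_adjoint]
    exact (IsSelfAdjoint.add_star_self A).isSymmetric
  have key := hT.inner_pow_apply_eq_nonnegWalkCount he (by simp [hA_e, hA_adjoint_e_zero])
    (fun m => by simp [hA_e, hA_adjoint_e]) (2 * k) 0
  have he_zero : e 0 = delta N 1 := by simp only [e, pow_zero]; rfl
  rw [← ContinuousLinearMap.toLinearMap_pow, ContinuousLinearMap.coe_coe, he_zero,
    nonnegWalkCount_two_mul_zero] at key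
  exact key
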